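/- arXiv:2203.13527 — 7 statements merged into one kernel-verified Lean document; each statement's English description precedes it below -/
import Mathlib

section
/- Let L ⊆ ℝⁿ × ℝⁿ be a Lagrange subspace and let A be a real n×n matrix. Then L is invariant under the linear Hamiltonian dynamics (x,p) ↦ (A x, −Aᵀ p) (i.e., (x,p) ∈ L implies (A x, −Aᵀ p) ∈ L) if and only if pᵀ A x = 0 for all (x,p) ∈ L. -/
open Matrix

/-- The canonical symplectic form on ℝⁿ × ℝⁿ:
`J((x₁,p₁),(x₂,p₂)) = p₂ᵀ x₁ − p₁ᵀ x₂`. -/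
def sympForm {n : ℕ} (v w : (Fin n → ℝ) × (Fin n → ℝ)) : ℝ :=
  w.2 ⬝ᵥ v.1 - v.2 ⬝ᵥ w.1

/-- A subspace `L ⊆ ℝⁿ × ℝⁿ` is a Lagrange subspace if it equals its orthogonal
companion with respect to the canonical symplectic form. -/
def IsLagrange {n : ℕ} (L : Submodule ℝ ((Fin n → ℝ) × (Fin n → ℝ))) : Prop :=
  ∀ v, v ∈ L ↔ ∀ w ∈ L, sympForm v w = 0

lemma transpose_dot {n : ℕ} (A : Matrix (Fin n) (Fin n) ℝ) (p x : Fin n → ℝ) :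
    (Aᵀ *ᵥ p) ⬝ᵥ x = p ⬝ᵥ (A *ᵥ x) := by
  rw [Matrix.mulVec_transpose, Matrix.dotProduct_mulVec]

theorem stmt_3 {n : ℕ} (L : Submodule ℝ ((Fin n → ℝ) × (Fin n → ℝ)))
    (hL : IsLagrange L) (A : Matrix (Fin n) (Fin n) ℝ) :
    (∀ v ∈ L, (A *ᵥ v.1, -(Aᵀ *ᵥ v.2)) ∈ L) ↔ (∀ v ∈ L, v.2 ⬝ᵥ (A *ᵥ v.1) = 0) := by
  constructor
  · intro h v hv
    have h2 := (hL v).mp hv _ (h v hv)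
    simp only [sympForm, neg_dotProduct, transpose_dot] at h2
    linarith
  · intro h v hv
    refine (hL _).mpr ?_
    intro w hw
    have hvw := h (v + w) (L.add_mem hv hw)
    have hv0 := h v hv
    have hw0 := h w hw
    simp only [Prod.fst_add, Prod.snd_add, Matrix.mulVec_add, add_dotProduct,
      dotProduct_add] at hvw
    simp only [sympForm, neg_dotProduct, transpose_dot]
    linarith
end

section
/- Let n = k + l. Let P = [[I_k, 0], [0, 0]] (n×n) and S = [[S₁₁, 0], [0, S₂₂]] (n×n block diagonal) with S₁₁ = S₁₁ᵀ a k×k matrix and S₂₂ = S₂₂ᵀ an invertible l×l matrix. Let A = [[A₁₁, A₁₂], [A₂₁, A₂₂]] (n×n), B = [B₁; B₂] (n×m), C = [C₁, C₂] (m×n), D (m×m) be real matrices, partitioned conformably. If the symmetric matrix [[Sᵀ A P + Pᵀ Aᵀ S, Sᵀ B − Pᵀ Cᵀ], [Bᵀ S − C P, −D − Dᵀ]] is negative semidefinite, then A₂₁ = 0, B₂ = 0, and moreover the reduced symmetric matrix [[A₁₁ᵀ S₁₁ + S₁₁ A₁₁, S₁₁ B₁ − C₁ᵀ], [B₁ᵀ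 S₁₁ − C₁, −D − Dᵀ]] is negative semidefinite. -/
/-!
Since `P = diag(I, 0)`, block multiplication shows that the diagonal of the dissipation matrix
vanishes at the coordinates of the second state block, and that the corresponding rows are
`[S₂₂ᵀ A₂₁, 0, S₂₂ᵀ B₂]`. In a negative semidefinite matrix a vanishing diagonal entry forces its
whole row to vanish, so `S₂₂ᵀ A₂₁ = 0` and `S₂₂ᵀ B₂ = 0`, and invertibility of `S₂₂` gives
`A₂₁ = 0` and `B₂ = 0`. The reduced matrix is the principal submatrix on the remaining
coordinates, hence again negative semidefinite.
-/

open Matrix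

/-- A real symmetric matrix `T` is negative semidefinite if `vᵀ T v ≤ 0` for all
vectors `v`. -/
def NegSemidefR {ι : Type*} [Fintype ι] (T : Matrix ι ι ℝ) : Prop :=
  T.IsSymm ∧ ∀ v : ι → ℝ, v ⬝ᵥ (T *ᵥ v) ≤ 0

section

variable {ι : Type*} [Fintype ι] {T : Matrix ι ι ℝ}

theorem negSemidefR_iff_posSemidef_neg : NegSemidefR T ↔ (-T).PosSemidef := by
  simp only [posSemidef_iff_dotProduct_mulVec, IsHermitian, conjTranspose_eq_transpose_of_trivial,
    transpose_neg, neg_inj, neg_mulVec, dotProduct_neg, star_trivial, neg_nonneg]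
  rfl

namespace NegSemidefR

theorem submatrix (hT : NegSemidefR T) {κ : Type*} [Fintype κ] (e : κ → ι) :
    NegSemidefR (T.submatrix e e) :=
  negSemidefR_iff_posSemidef_neg.mpr <| (negSemidefR_iff_posSemidef_neg.mp hT).submatrix e

theorem apply_eq_zero_of_apply_self_eq_zero (hT : NegSemidefR T) {i : ι} (hii : T i i = 0)
    (j : ι) : T i j = 0 := by
  classical
  have hcol : (-T) *ᵥ Pi.single i 1 = 0 :=
    ((negSemidefR_iff_posSemidef_neg.mp hT).dotProduct_mulVec_zero_iff _).mp (by simp [hii])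
  rw [← hT.1.apply i j]
  simpa using congrFun hcol j

theorem eq_zero_of_fromBlocks_fromBlocks_zero {k l m : Type*} [Fintype k] [Fintype l] [Fintype m]
    {E : Matrix k k ℝ} {F : Matrix k l ℝ} {G : Matrix l k ℝ} {H : Matrix k m ℝ}
    {K : Matrix l m ℝ} {L : Matrix m k ℝ} {N : Matrix m l ℝ} {W : Matrix m m ℝ}
    (hT : NegSemidefR (fromBlocks (fromBlocks E F G 0) (fromRows H K) (fromCols L N) W)) :
    G = 0 ∧ K = 0 := by
  have hrow := fun b => hT.apply_eq_zero_of_apply_self_eq_zero (i := Sum.inl (Sum.inr b)) rfl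
  exact ⟨by ext b a; exact hrow b (Sum.inl (Sum.inl a)), by ext b c; exact hrow b (Sum.inr c)⟩

end NegSemidefR

end

theorem fromBlocks_fromBlocks_submatrix_map_inl {α k l m : Type*}
    (E : Matrix k k α) (F : Matrix k l α) (G : Matrix l k α) (Z : Matrix l l α)
    (H : Matrix k m α) (K : Matrix l m α) (L : Matrix m k α) (N : Matrix m l α)
    (W : Matrix m m α) :
    (fromBlocks (fromBlocks E F G Z) (fromRows H K) (fromCols L N) W).submatrix
      (Sum.map Sum.inl id) (Sum.map Sum.inl id) = fromBlocks E H L W := by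
  ext (_ | _) (_ | _) <;> rfl

section Dissipation

variable {R : Type*} [CommRing R]

/-- The generalized dissipation inequality of `ẋ = A x + B u, y = C x + D u` for the Lagrange
subspace represented by `(P, S)` says that this matrix is negative semidefinite. -/
def dissipationMatrix {n m : Type*} [Fintype n] [Fintype m] (A P S : Matrix n n R)
    (B : Matrix n m R) (C : Matrix m n R) (D : Matrix m m R) : Matrix (n ⊕ m) (n ⊕ m) R :=
  fromBlocks (Sᵀ * A * P + Pᵀ * Aᵀ * S) (Sᵀ * B - Pᵀ * Cᵀ) (Bᵀ * S - C * P) (-D - Dᵀ)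

theorem dissipationMatrix_fromBlocks {k l m : Type*} [Fintype k] [Fintype l] [Fintype m]
    [DecidableEq k] [DecidableEq l]
    (A11 : Matrix k k R) (A12 : Matrix k l R) (A21 : Matrix l k R) (A22 : Matrix l l R)
    (S11 : Matrix k k R) (S22 : Matrix l l R) (B1 : Matrix k m R) (B2 : Matrix l m R)
    (C1 : Matrix m k R) (C2 : Matrix m l R) (D : Matrix m m R) :
    dissipationMatrix (fromBlocks A11 A12 A21 A22) (fromBlocks 1 0 0 0) (fromBlocks S11 0 0 S22)
        (fromRows B1 B2) (fromCols C1 C2) D =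
      fromBlocks (fromBlocks (S11ᵀ * A11 + A11ᵀ * S11) (A21ᵀ * S22) (S22ᵀ * A21) 0)
        (fromRows (S11ᵀ * B1 - C1ᵀ) (S22ᵀ * B2)) (fromCols (B1ᵀ * S11 - C1) (B2ᵀ * S22))
        (-D - Dᵀ) := by
  simp only [dissipationMatrix, fromBlocks_transpose, transpose_fromRows, transpose_fromCols,
    transpose_zero, transpose_one, fromBlocks_multiply, fromBlocks_mul_fromRows,
    fromCols_mul_fromBlocks, fromBlocks_add, fromBlocks_inj, Matrix.zero_mul, Matrix.mul_zero,
    Matrix.one_mul, Matrix.mul_one, add_zero, zero_add, true_and, and_true]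
  exact ⟨by ext (_ | _) _ <;> simp, by ext _ (_ | _) <;> simp⟩

end Dissipation

theorem stmt_7_general {k l m : ℕ}
    (A11 : Matrix (Fin k) (Fin k) ℝ) (A12 : Matrix (Fin k) (Fin l) ℝ)
    (A21 : Matrix (Fin l) (Fin k) ℝ) (A22 : Matrix (Fin l) (Fin l) ℝ)
    (S11 : Matrix (Fin k) (Fin k) ℝ) (S22 : Matrix (Fin l) (Fin l) ℝ)
    (B1 : Matrix (Fin k) (Fin m) ℝ) (B2 : Matrix (Fin l) (Fin m) ℝ)
    (C1 : Matrix (Fin m) (Fin k) ℝ) (C2 : Matrix (Fin m) (Fin l) ℝ)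
    (D : Matrix (Fin m) (Fin m) ℝ)
    (hS11 : S11ᵀ = S11) (hS22inv : IsUnit S22)
    (h : NegSemidefR (Matrix.fromBlocks
      ((Matrix.fromBlocks S11 0 0 S22)ᵀ * (Matrix.fromBlocks A11 A12 A21 A22) *
          (Matrix.fromBlocks 1 0 0 0) +
        (Matrix.fromBlocks 1 0 0 0)ᵀ * (Matrix.fromBlocks A11 A12 A21 A22)ᵀ *
          (Matrix.fromBlocks S11 0 0 S22))
      ((Matrix.fromBlocks S11 0 0 S22)ᵀ * (Matrix.fromRows B1 B2) -
        (Matrix.fromBlocks 1 0 0 0)ᵀ * (Matrix.fromCols C1 C2)ᵀ)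
      ((Matrix.fromRows B1 B2)ᵀ * (Matrix.fromBlocks S11 0 0 S22) -
        (Matrix.fromCols C1 C2) * (Matrix.fromBlocks 1 0 0 0))
      (-D - Dᵀ))) :
    A21 = 0 ∧ B2 = 0 ∧
      NegSemidefR (Matrix.fromBlocks
        (A11ᵀ * S11 + S11 * A11) (S11 * B1 - C1ᵀ)
        (B1ᵀ * S11 - C1) (-D - Dᵀ)) := by
  have hblocks : NegSemidefR (dissipationMatrix (fromBlocks A11 A12 A21 A22) (fromBlocks 1 0 0 0)
      (fromBlocks S11 0 0 S22) (fromRows B1 B2) (fromCols C1 C2) D) := h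
  rw [dissipationMatrix_fromBlocks] at hblocks
  obtain ⟨hA21, hB2⟩ := hblocks.eq_zero_of_fromBlocks_fromBlocks_zero
  let _ : Invertible S22ᵀ := ((isUnit_transpose S22).mpr hS22inv).invertible
  refine ⟨mul_right_injective_of_invertible S22ᵀ (by simpa only [Matrix.mul_zero] using hA21),
    mul_right_injective_of_invertible S22ᵀ (by simpa only [Matrix.mul_zero] using hB2), ?_⟩
  simpa [fromBlocks_fromBlocks_submatrix_map_inl, hS11, add_comm] using
    hblocks.submatrix (Sum.map Sum.inl id)

theorem stmt_7 {k l m : ℕ}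
    (A11 : Matrix (Fin k) (Fin k) ℝ) (A12 : Matrix (Fin k) (Fin l) ℝ)
    (A21 : Matrix (Fin l) (Fin k) ℝ) (A22 : Matrix (Fin l) (Fin l) ℝ)
    (S11 : Matrix (Fin k) (Fin k) ℝ) (S22 : Matrix (Fin l) (Fin l) ℝ)
    (B1 : Matrix (Fin k) (Fin m) ℝ) (B2 : Matrix (Fin l) (Fin m) ℝ)
    (C1 : Matrix (Fin m) (Fin k) ℝ) (C2 : Matrix (Fin m) (Fin l) ℝ)
    (D : Matrix (Fin m) (Fin m) ℝ)
    (hS11 : S11ᵀ = S11) (hS22 : S22ᵀ = S22) (hS22inv : IsUnit S22)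
    (h : NegSemidefR (Matrix.fromBlocks
      ((Matrix.fromBlocks S11 0 0 S22)ᵀ * (Matrix.fromBlocks A11 A12 A21 A22) *
          (Matrix.fromBlocks 1 0 0 0) +
        (Matrix.fromBlocks 1 0 0 0)ᵀ * (Matrix.fromBlocks A11 A12 A21 A22)ᵀ *
          (Matrix.fromBlocks S11 0 0 S22))
      ((Matrix.fromBlocks S11 0 0 S22)ᵀ * (Matrix.fromRows B1 B2) -
        (Matrix.fromBlocks 1 0 0 0)ᵀ * (Matrix.fromCols C1 C2)ᵀ)
      ((Matrix.fromRows B1 B2)ᵀ * (Matrix.fromBlocks S11 0 0 S22) -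
        (Matrix.fromCols C1 C2) * (Matrix.fromBlocks 1 0 0 0))
      (-D - Dᵀ))) :
    A21 = 0 ∧ B2 = 0 ∧
      NegSemidefR (Matrix.fromBlocks
        (A11ᵀ * S11 + S11 * A11) (S11 * B1 - C1ᵀ)
        (B1ᵀ * S11 - C1) (-D - Dᵀ)) :=
  stmt_7_general A11 A12 A21 A22 S11 S22 B1 B2 C1 C2 D hS11 hS22inv h
end

section
/- Let A, P, S be real n×n matrices with Sᵀ P = Pᵀ S and rank [P; S] = n, let B be a real n×m matrix, C a real m×n matrix, and D a real m×m matrix. If the symmetric matrix [[Sᵀ A P + Pᵀ Aᵀ S, Sᵀ B − Pᵀ Cᵀ], [Bᵀ S − C P, −D − Dᵀ]] is negative semidefinite, then the column space of B is contained in the column space of P, and the column space of P is invariant under A (i.e., A x lies in the column space of P for every x in the column space of P). -/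
open Matrix

lemma quad_aux {a c : ℝ} (h : ∀ t : ℝ, 2*t*a + t^2*c ≤ 0) : a = 0 := by
  by_contra ha
  set k : ℝ := (|c| + 1)⁻¹ with hk
  have hkpos : 0 < k := by positivity
  have hk1 : k * (|c| + 1) = 1 := by
    rw [hk]; field_simp
  have hc : -|c| ≤ c := neg_abs_le c
  have ha2 : 0 < a ^ 2 := by positivity
  have h1 := h (a * k)
  nlinarith [mul_pos ha2 hkpos, sq_nonneg (a*k), mul_pos (mul_pos ha2 hkpos) hkpos]

lemma range_transpose_mul_self' {n m : ℕ} (P : Matrix (Fin n) (Fin m) ℝ) :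
    LinearMap.range (Pᵀ * P).mulVecLin = LinearMap.range Pᵀ.mulVecLin := by
  apply Submodule.eq_of_le_of_finrank_eq
  · rintro _ ⟨x, rfl⟩
    exact ⟨P *ᵥ x, by simp [mulVecLin_apply, mulVec_mulVec]⟩
  · simpa [Matrix.rank] using (rank_transpose_mul_self P).trans (rank_transpose P).symm

lemma mem_range_of_perp {n m : ℕ} (P : Matrix (Fin n) (Fin m) ℝ) (y : Fin n → ℝ)
    (hy : ∀ v, Pᵀ *ᵥ v = 0 → v ⬝ᵥ y = 0) : y ∈ LinearMap.range P.mulVecLin := by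
  obtain ⟨u, hu⟩ : Pᵀ *ᵥ y ∈ LinearMap.range (Pᵀ * P).mulVecLin := by
    rw [range_transpose_mul_self']; exact ⟨y, rfl⟩
  simp only [mulVecLin_apply] at hu
  set v := y - P *ᵥ u with hv
  have hPv : Pᵀ *ᵥ v = 0 := by
    rw [hv, Matrix.mulVec_sub, Matrix.mulVec_mulVec, hu, sub_self]
  have h1 : v ⬝ᵥ y = 0 := hy v hPv
  have h2 : v ⬝ᵥ (P *ᵥ u) = 0 := by
    rw [dotProduct_mulVec, ← Matrix.mulVec_transpose, hPv, zero_dotProduct]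
  have h3 : v ⬝ᵥ v = 0 := by
    rw [hv]
    rw [dotProduct_sub] at *
    rw [hv] at h1 h2
    linarith
  have h4 : v = 0 := dotProduct_self_eq_zero.mp h3
  refine ⟨u, ?_⟩
  have h5 : y - P *ᵥ u = 0 := by rw [← hv, h4]
  simp only [mulVecLin_apply]
  exact (sub_eq_zero.mp h5).symm

lemma lagrange_aux {n : ℕ} {P S : Matrix (Fin n) (Fin n) ℝ}
    (hsym : Sᵀ * P = Pᵀ * S) (hrank : (fromRows P S).rank = n) {v : Fin n → ℝ}
    (hv : Pᵀ *ᵥ v = 0) : ∃ w, P *ᵥ w = 0 ∧ S *ᵥ w = v := by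
  have hker : ∀ w : Fin n → ℝ, P *ᵥ w = 0 → S *ᵥ w = 0 → w = 0 := by
    intro w h1 h2
    have hk : LinearMap.ker (fromRows P S).mulVecLin = ⊥ := by
      have hrn := LinearMap.finrank_range_add_finrank_ker (fromRows P S).mulVecLin
      rw [Module.finrank_fin_fun] at hrn
      have heq : Module.finrank ℝ
          (LinearMap.range (fromRows P S).mulVecLin) = n := hrank
      rw [heq] at hrn
      have hker0 : Module.finrank ℝ (LinearMap.ker (fromRows P S).mulVecLin) = 0 := by omega
      exact Submodule.finrank_eq_zero.mp hker0
    have hmem : w ∈ LinearMap.ker (fromRows P S).mulVecLin := by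
      simp only [LinearMap.mem_ker, mulVecLin_apply, fromRows_mulVec, h1, h2]
      ext (i | i) <;> simp
    rw [hk, Submodule.mem_bot] at hmem
    exact hmem
  classical
  set f := S.mulVecLin.comp (LinearMap.ker P.mulVecLin).subtype with hf
  have hfker : LinearMap.ker f = ⊥ := by
    rw [LinearMap.ker_eq_bot']
    rintro ⟨w, hw⟩ h0
    have hw' : P *ᵥ w = 0 := hw
    have hS0 : S *ᵥ w = 0 := by
      simpa [hf, mulVecLin_apply] using h0
    exact Subtype.ext (hker w hw' hS0)
  have hrangef : LinearMap.range f
      = (LinearMap.ker P.mulVecLin).map S.mulVecLin := by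
    rw [hf, LinearMap.range_comp, Submodule.range_subtype]
  have hd1 := LinearMap.finrank_range_add_finrank_ker f
  rw [hfker, finrank_bot, add_zero, hrangef] at hd1
  have hd2 := LinearMap.finrank_range_add_finrank_ker P.mulVecLin
  have hd3 := LinearMap.finrank_range_add_finrank_ker Pᵀ.mulVecLin
  rw [Module.finrank_fin_fun] at hd2 hd3
  have hrk : Module.finrank ℝ (LinearMap.range Pᵀ.mulVecLin)
      = Module.finrank ℝ (LinearMap.range P.mulVecLin) := rank_transpose P
  have hle : (LinearMap.ker P.mulVecLin).map S.mulVecLin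
      ≤ LinearMap.ker Pᵀ.mulVecLin := by
    rintro _ ⟨w, hw, rfl⟩
    have hw' : P *ᵥ w = 0 := hw
    show Pᵀ *ᵥ (S *ᵥ w) = 0
    rw [mulVec_mulVec, ← hsym, ← mulVec_mulVec, hw', mulVec_zero]
  have heq : (LinearMap.ker P.mulVecLin).map S.mulVecLin
      = LinearMap.ker Pᵀ.mulVecLin :=
    Submodule.eq_of_le_of_finrank_eq hle (by omega)
  have hvmem : v ∈ LinearMap.ker Pᵀ.mulVecLin := hv
  rw [← heq] at hvmem
  obtain ⟨w, hw, hsw⟩ := hvmem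
  exact ⟨w, hw, hsw⟩

theorem stmt_8 {n m : ℕ} (A P S : Matrix (Fin n) (Fin n) ℝ)
    (B : Matrix (Fin n) (Fin m) ℝ) (C : Matrix (Fin m) (Fin n) ℝ)
    (D : Matrix (Fin m) (Fin m) ℝ)
    (hsym : Sᵀ * P = Pᵀ * S) (hrank : (Matrix.fromRows P S).rank = n)
    (h : NegSemidefR (Matrix.fromBlocks
      (Sᵀ * A * P + Pᵀ * Aᵀ * S) (Sᵀ * B - Pᵀ * Cᵀ)
      (Bᵀ * S - C * P) (-D - Dᵀ))) :
    LinearMap.range (Matrix.mulVecLin B) ≤ LinearMap.range (Matrix.mulVecLin P) ∧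
      ∀ x ∈ LinearMap.range (Matrix.mulVecLin P),
        A *ᵥ x ∈ LinearMap.range (Matrix.mulVecLin P) := by
  obtain ⟨hTsym, hq⟩ := h
  have key : ∀ v : Fin n → ℝ, Pᵀ *ᵥ v = 0 →
      (∀ x : Fin m → ℝ, v ⬝ᵥ (B *ᵥ x) = 0) ∧
      (∀ x : Fin n → ℝ, v ⬝ᵥ (A *ᵥ (P *ᵥ x)) = 0) := by
    intro v hv
    obtain ⟨w, hw1, hw2⟩ := lagrange_aux hsym hrank hv
    have hP : ∀ z : Fin n → ℝ, w ⬝ᵥ (Pᵀ *ᵥ z) = 0 := fun z => by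
      rw [dotProduct_mulVec, vecMul_transpose, hw1, zero_dotProduct]
    have hS : ∀ z : Fin n → ℝ, w ⬝ᵥ (Sᵀ *ᵥ z) = v ⬝ᵥ z := fun z => by
      rw [dotProduct_mulVec, vecMul_transpose, hw2]
    constructor
    · intro x
      have hBt : x ⬝ᵥ (Bᵀ *ᵥ v) = v ⬝ᵥ (B *ᵥ x) := by
        rw [dotProduct_mulVec, vecMul_transpose]
        exact dotProduct_comm _ _
      apply quad_aux (c := -(x ⬝ᵥ (D *ᵥ x)) - x ⬝ᵥ (Dᵀ *ᵥ x))
      intro t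
      have hq' := hq (Sum.elim w (t • x))
      rw [fromBlocks_mulVec, sumElim_dotProduct_sumElim] at hq'
      simp only [Sum.elim_comp_inl, Sum.elim_comp_inr, Matrix.add_mulVec, Matrix.sub_mulVec, Matrix.neg_mulVec,
        ← Matrix.mulVec_mulVec, Matrix.mulVec_add, Matrix.mulVec_smul,
        dotProduct_add, add_dotProduct, dotProduct_sub, sub_dotProduct,
        dotProduct_neg, neg_dotProduct, dotProduct_smul, smul_dotProduct,
        smul_eq_mul, hw1, hw2, Matrix.mulVec_zero, dotProduct_zero,
        zero_dotProduct, hP, hS, hBt] at hq'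
      linarith [hq']
    · intro x
      have hAP : x ⬝ᵥ (Pᵀ *ᵥ (Aᵀ *ᵥ v)) = v ⬝ᵥ (A *ᵥ (P *ᵥ x)) := by
        rw [dotProduct_mulVec, vecMul_transpose, dotProduct_mulVec, vecMul_transpose]
        exact dotProduct_comm _ _
      apply quad_aux
        (c := x ⬝ᵥ (Sᵀ *ᵥ (A *ᵥ (P *ᵥ x))) + x ⬝ᵥ (Pᵀ *ᵥ (Aᵀ *ᵥ (S *ᵥ x))))
      intro t
      have hq' := hq (Sum.elim (w + t • x) (0 : Fin m → ℝ))
      rw [fromBlocks_mulVec, sumElim_dotProduct_sumElim] at hq'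
      simp only [Sum.elim_comp_inl, Sum.elim_comp_inr, Matrix.add_mulVec, Matrix.sub_mulVec, Matrix.neg_mulVec,
        ← Matrix.mulVec_mulVec, Matrix.mulVec_add, Matrix.mulVec_smul,
        dotProduct_add, add_dotProduct, dotProduct_sub, sub_dotProduct,
        dotProduct_neg, neg_dotProduct, dotProduct_smul, smul_dotProduct,
        smul_eq_mul, hw1, hw2, Matrix.mulVec_zero, dotProduct_zero,
        zero_dotProduct, add_zero, zero_add, hP, hS, hAP] at hq'
      linarith [hq']
  constructor
  · rintro _ ⟨x, rfl⟩
    simp only [mulVecLin_apply]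
    exact mem_range_of_perp P _ (fun v hv => (key v hv).1 x)
  · rintro _ ⟨x, rfl⟩
    simp only [mulVecLin_apply]
    exact mem_range_of_perp P _ (fun v hv => (key v hv).2 x)
end

section
/- Let A, P, S be real n×n matrices with Sᵀ P = Pᵀ S and rank [P; S] = n, let B be a real n×m matrix, C a real m×n matrix, and D a real m×m matrix, and suppose the symmetric matrix [[Sᵀ A P + Pᵀ Aᵀ S, Sᵀ B − Pᵀ Cᵀ], [Bᵀ S − C P, −D − Dᵀ]] is negative semidefinite. Then for every i ≥ 0 the column space of Aⁱ B is contained in the column space of P; consequently, if rank P < n, then the pair (A, B) is uncontrollable, i.e., the controllability matrix [B, A B, A² B, …, A^{n−1} B] has rank strictly less than n. -/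
open Matrix

/-- The controllability matrix `[B, A B, A² B, …, A^{n−1} B]` of the pair `(A, B)`,
with columns indexed by `Fin n × Fin m`. -/
def ctrbMatrix {n m : ℕ} (A : Matrix (Fin n) (Fin n) ℝ)
    (B : Matrix (Fin n) (Fin m) ℝ) : Matrix (Fin n) (Fin n × Fin m) ℝ :=
  Matrix.of fun i jq => (A ^ (jq.1 : ℕ) * B) i jq.2

/-!
Write `M` for the dissipation matrix. For `x ∈ ker P` the quadratic form of `M` at `(x, 0)` is
`2 (P x)ᵀ Aᵀ S x = 0`, so negative semidefiniteness forces `M (x, 0) = 0`, i.e.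
`Pᵀ Aᵀ S x = 0` and `Bᵀ S x = 0`. Because `(P, S)` is Lagrangian, `S` maps `ker P` onto
`ker Pᵀ`; hence `ker Pᵀ` is `Aᵀ`-invariant and killed by `Bᵀ`, so it is killed by every
`(Aⁱ B)ᵀ`. Dually, the columns of every `Aⁱ B`, and so of the controllability matrix, lie in
the column space of `P`.
-/

open Module LinearMap

section Field

variable {K : Type*} [Field K] {ι m n p : Type*}

theorem Matrix.rank_add_finrank_ker_mulVecLin [Fintype n] (M : Matrix m n K) :
    M.rank + finrank K (ker M.mulVecLin) = Fintype.card n :=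
  M.mulVecLin.finrank_range_add_finrank_ker.trans (finrank_fintype_fun_eq_card K)

theorem Matrix.ker_mulVecLin_eq_bot_of_rank_eq_card [Fintype n] {M : Matrix m n K}
    (h : M.rank = Fintype.card n) : ker M.mulVecLin = ⊥ := by
  have := M.rank_add_finrank_ker_mulVecLin
  exact Submodule.finrank_eq_zero.mp (by omega)

theorem Matrix.rank_add_finrank_ker_mulVecLin_transpose [Fintype m] [Fintype n]
    (M : Matrix m n K) :
    M.rank + finrank K (ker Mᵀ.mulVecLin) = Fintype.card m := by
  rw [← rank_transpose]
  exact Mᵀ.rank_add_finrank_ker_mulVecLin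

/-- `[P N]` has the same left kernel as `P`, hence the same rank, so its column space is that
of `P`. -/
theorem Matrix.range_mulVecLin_le_of_ker_transpose_le [Fintype m] [Fintype n] [Fintype p]
    (P : Matrix m n K) (N : Matrix m p K)
    (h : ker Pᵀ.mulVecLin ≤ ker Nᵀ.mulVecLin) : range N.mulVecLin ≤ range P.mulVecLin := by
  set Q := P.fromCols N
  have hPQ : range P.mulVecLin ≤ range Q.mulVecLin := by
    rintro _ ⟨x, rfl⟩
    exact ⟨Sum.elim x 0, by simp [Q, fromCols_mulVec]⟩
  have hNQ : range N.mulVecLin ≤ range Q.mulVecLin := by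
    rintro _ ⟨x, rfl⟩
    exact ⟨Sum.elim 0 x, by simp [Q, fromCols_mulVec]⟩
  have hker : ker Qᵀ.mulVecLin = ker Pᵀ.mulVecLin := by
    ext w
    rw [mem_ker, mem_ker, mulVecLin_apply, transpose_fromCols, fromRows_mulVec,
      ← Sum.elim_zero_zero, Sum.elim_eq_iff]
    exact ⟨And.left, fun hw => ⟨hw, h hw⟩⟩
  have hrank : P.rank = Q.rank := by
    have hP := P.rank_add_finrank_ker_mulVecLin_transpose
    have hQ := Q.rank_add_finrank_ker_mulVecLin_transpose
    rw [hker] at hQ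
    omega
  rwa [Submodule.eq_of_le_of_finrank_eq hPQ hrank]

theorem Matrix.map_ker_mulVecLin_eq_ker_transpose [Fintype ι] {P S : Matrix ι ι K}
    (hsym : Sᵀ * P = Pᵀ * S)
    (hinj : ker (P.fromRows S).mulVecLin = ⊥) :
    (ker P.mulVecLin).map S.mulVecLin = ker Pᵀ.mulVecLin := by
  apply Submodule.eq_of_le_of_finrank_eq
  · rintro _ ⟨x, hx, rfl⟩
    rw [SetLike.mem_coe, mem_ker, mulVecLin_apply] at hx
    rw [mem_ker, mulVecLin_apply, mulVecLin_apply, mulVec_mulVec, ← hsym, ← mulVec_mulVec, hx,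
      mulVec_zero]
  · have hinjOn : Function.Injective (S.mulVecLin.domRestrict (ker P.mulVecLin)) := by
      rw [← ker_eq_bot, ker_eq_bot']
      rintro ⟨x, hx⟩ hSx
      rw [mem_ker, mulVecLin_apply] at hx
      replace hSx : S *ᵥ x = 0 := hSx
      exact Subtype.ext <| ker_mulVecLin_eq_bot_iff.1 hinj x <| by
        rw [fromRows_mulVec, hx, hSx, Sum.elim_zero_zero]
    rw [← range_domRestrict, finrank_range_of_inj hinjOn]
    have h₁ := P.rank_add_finrank_ker_mulVecLin
    have h₂ := P.rank_add_finrank_ker_mulVecLin_transpose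
    omega

end Field

section Dissipation

variable {ι κ : Type*} [Fintype ι] [Fintype κ]

theorem NegSemidefR.mulVec_eq_zero {M : Matrix ι ι ℝ} (hM : NegSemidefR M) {x : ι → ℝ}
    (hx : x ⬝ᵥ (M *ᵥ x) = 0) : M *ᵥ x = 0 := by
  have hpsd : (-M).PosSemidef := posSemidef_iff_dotProduct_mulVec.2
    ⟨isHermitian_iff_isSymm.2 hM.1.neg, fun y => by simpa [neg_mulVec] using hM.2 y⟩
  simpa [neg_mulVec] using (hpsd.dotProduct_mulVec_zero_iff x).1 (by simp [neg_mulVec, hx])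

theorem NegSemidefR.dissipation_mulVec_eq_zero {A P S : Matrix ι ι ℝ} {B : Matrix ι κ ℝ}
    {C : Matrix κ ι ℝ} {D : Matrix κ κ ℝ}
    (h : NegSemidefR (fromBlocks
      (Sᵀ * A * P + Pᵀ * Aᵀ * S) (Sᵀ * B - Pᵀ * Cᵀ) (Bᵀ * S - C * P) (-D - Dᵀ)))
    {x : ι → ℝ} (hx : P *ᵥ x = 0) :
    Pᵀ *ᵥ (Aᵀ *ᵥ (S *ᵥ x)) = 0 ∧ Bᵀ *ᵥ (S *ᵥ x) = 0 := by
  have hSAP : (Sᵀ * A * P) *ᵥ x = 0 := by rw [← mulVec_mulVec, hx, mulVec_zero]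
  have hquad : Sum.elim x 0 ⬝ᵥ (fromBlocks (Sᵀ * A * P + Pᵀ * Aᵀ * S) (Sᵀ * B - Pᵀ * Cᵀ)
      (Bᵀ * S - C * P) (-D - Dᵀ) *ᵥ Sum.elim x 0) = 0 := by
    rw [fromBlocks_mulVec, sumElim_dotProduct_sumElim]
    simp only [Sum.elim_comp_inl, Sum.elim_comp_inr, mulVec_zero, add_zero, zero_dotProduct]
    rw [add_mulVec, hSAP, zero_add, Matrix.mul_assoc, ← mulVec_mulVec, dotProduct_mulVec,
      vecMul_transpose, hx, zero_dotProduct]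
  have hMx := h.mulVec_eq_zero hquad
  rw [fromBlocks_mulVec, ← Sum.elim_zero_zero, Sum.elim_eq_iff] at hMx
  simp only [Sum.elim_comp_inl, Sum.elim_comp_inr, mulVec_zero, add_zero] at hMx
  obtain ⟨hx₁, hx₂⟩ := hMx
  rw [add_mulVec, hSAP, zero_add, Matrix.mul_assoc, ← mulVec_mulVec, ← mulVec_mulVec] at hx₁
  rw [sub_mulVec, ← mulVec_mulVec x C, hx, mulVec_zero, sub_zero, ← mulVec_mulVec] at hx₂
  exact ⟨hx₁, hx₂⟩

end Dissipation

theorem Matrix.ker_transpose_le_ker_transpose_pow_mul {R ι κ : Type*} [CommSemiring R]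
    [Fintype ι] [Fintype κ] [DecidableEq ι] {A : Matrix ι ι R} {B : Matrix ι κ R}
    {W : Submodule R (ι → R)} (hA : ∀ w ∈ W, Aᵀ *ᵥ w ∈ W) (hB : ∀ w ∈ W, Bᵀ *ᵥ w = 0) (i : ℕ) :
    W ≤ ker (A ^ i * B)ᵀ.mulVecLin := by
  induction i with
  | zero =>
    intro w hw
    rw [mem_ker, mulVecLin_apply, pow_zero, Matrix.one_mul]
    exact hB w hw
  | succ i ih =>
    intro w hw
    rw [mem_ker, mulVecLin_apply, pow_succ', Matrix.mul_assoc, transpose_mul, ← mulVec_mulVec]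
    exact ih (hA w hw)

theorem stmt_9 {n m : ℕ} (A P S : Matrix (Fin n) (Fin n) ℝ)
    (B : Matrix (Fin n) (Fin m) ℝ) (C : Matrix (Fin m) (Fin n) ℝ)
    (D : Matrix (Fin m) (Fin m) ℝ)
    (hsym : Sᵀ * P = Pᵀ * S) (hrank : (Matrix.fromRows P S).rank = n)
    (h : NegSemidefR (Matrix.fromBlocks
      (Sᵀ * A * P + Pᵀ * Aᵀ * S) (Sᵀ * B - Pᵀ * Cᵀ)
      (Bᵀ * S - C * P) (-D - Dᵀ))) :
    (∀ i : ℕ, LinearMap.range (Matrix.mulVecLin (A ^ i * B)) ≤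
        LinearMap.range (Matrix.mulVecLin P)) ∧
      (P.rank < n → (ctrbMatrix A B).rank < n) := by
  have hlag := map_ker_mulVecLin_eq_ker_transpose hsym
    (ker_mulVecLin_eq_bot_of_rank_eq_card (by simpa using hrank))
  have hdiss : ∀ w ∈ ker Pᵀ.mulVecLin, Pᵀ *ᵥ (Aᵀ *ᵥ w) = 0 ∧ Bᵀ *ᵥ w = 0 := by
    rw [← hlag]
    rintro _ ⟨x, hx, rfl⟩
    exact h.dissipation_mulVec_eq_zero hx
  have hker (i : ℕ) : ker Pᵀ.mulVecLin ≤ ker (A ^ i * B)ᵀ.mulVecLin :=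
    ker_transpose_le_ker_transpose_pow_mul (fun w hw => (hdiss w hw).1)
      (fun w hw => (hdiss w hw).2) i
  refine ⟨fun i => range_mulVecLin_le_of_ker_transpose_le P _ (hker i), fun hP => ?_⟩
  have hctrb : range (ctrbMatrix A B).mulVecLin ≤ range P.mulVecLin := by
    refine range_mulVecLin_le_of_ker_transpose_le P _ fun w hw => ?_
    ext ⟨j, q⟩
    exact congrFun (hker j hw) q
  exact (Submodule.finrank_mono hctrb).trans_lt hP
end

section
/- Let L ⊆ ℝⁿ × ℝⁿ be a Lagrange subspace and let m be the dimension of the projection of L onto the first factor ℝⁿ (the x-component). Then there exist a permutation σ of the coordinates {1,…,n} (applied simultaneously to the x- and p-components) and a symmetric n×n matrix W such that, after permuting coordinates by σ and writing x = (x₁, x₂), p = (p₁, p₂) with x₁, p₁ ∈ ℝᵐ and x₂, p₂ ∈ ℝ^{n−m}, the subspace L is given by L = { (x, p) ∈ ℝⁿ × ℝⁿ : (p₁, −x₂) = W (x₁, p₂) }. -/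
open Matrix

/-!
Let `X ⊆ ℝⁿ` be the projection of `L` to the `x`-space and `m = dim X`. The coordinate
functionals restricted to `X` span `X*`, so `m` of them form a basis: `X` projects isomorphically
onto the coordinates in some set `S` with `|S| = m`. Then `a(x, p) = (x_S, p_{Sᶜ})` is injective
on `L`: `x_S = 0` forces `x = 0`; then `(0, p) ∈ L` makes `p` orthogonal to `X`, which together
with `p_{Sᶜ} = 0` forces `p = 0`. Since `dim L = n`, `L` is the graph over `a` of a linear map
with values `b(x, p) = (p_S, -x_{Sᶜ})`, and its matrix is symmetric because
`J(v, w) = b(w) ⬝ᵥ a(v) - b(v) ⬝ᵥ a(w)` vanishes on `L`. A permutation moving `S` to the first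
`m` coordinates gives the normal form.
-/

open Module

theorem Submodule.exists_finset_funLeft_bijective {K ι : Type*} [Field K] [Fintype ι]
    (X : Submodule K (ι → K)) :
    ∃ S : Finset ι, S.card = finrank K X ∧
      Function.Bijective ((LinearMap.funLeft K K ((↑) : S → ι)).domRestrict X) := by
  classical
  set coord : ι → Module.Dual K X := fun i => (LinearMap.proj i).comp X.subtype
  obtain ⟨b, -, -, hspan, hli⟩ :=
    exists_linearIndepOn_extension (linearIndepOn_empty K coord) (Set.empty_subset Set.univ)
  set S := b.toFinset
  have hinj : Function.Injective ((LinearMap.funLeft K K ((↑) : S → ι)).domRestrict X) := by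
    rw [← LinearMap.ker_eq_bot, Submodule.eq_bot_iff]
    intro x hx
    have hb : Submodule.span K (coord '' b) ≤ LinearMap.ker (Module.Dual.eval K X x) := by
      rw [Submodule.span_le]
      rintro _ ⟨i, hi, rfl⟩
      exact congrFun hx ⟨i, Set.mem_toFinset.mpr hi⟩
    ext i
    exact hb (hspan ⟨i, Set.mem_univ i, rfl⟩)
  have hcard : S.card = finrank K X := by
    refine le_antisymm ?_ ?_
    · have := hli.fintype_card_le_finrank
      rwa [Subspace.dual_finrank_eq, ← Set.toFinset_card] at this
    · simpa using LinearMap.finrank_le_finrank_of_injective hinj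
  refine ⟨S, hcard, hinj, ?_⟩
  rwa [← LinearMap.injective_iff_surjective_of_finrank_eq_finrank (by simp [hcard])]

theorem Matrix.isSymm_of_mulVec_dotProduct_comm {K ι : Type*} [CommSemiring K] [Fintype ι]
    [DecidableEq ι] {W : Matrix ι ι K} (hW : ∀ u v, W *ᵥ u ⬝ᵥ v = W *ᵥ v ⬝ᵥ u) : W.IsSymm :=
  IsSymm.ext fun i j => by
    simpa [mulVec_single, dotProduct_single] using hW (Pi.single i 1) (Pi.single j 1)

theorem eq_zero_of_forall_dotProduct_eq_zero {K ι : Type*} [Field K] [LinearOrder K]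
    [IsStrictOrderedRing K] [Fintype ι] {X : Submodule K (ι → K)} {S : Finset ι}
    (hS : Function.Surjective ((LinearMap.funLeft K K ((↑) : S → ι)).domRestrict X))
    {p : ι → K} (hpX : ∀ x ∈ X, p ⬝ᵥ x = 0) (hpS : ∀ i ∉ S, p i = 0) : p = 0 := by
  obtain ⟨⟨x, hx⟩, hxp⟩ := hS fun i => p i
  have hxS : ∀ i ∈ S, x i = p i := fun i hi => congrFun hxp ⟨i, hi⟩
  refine dotProduct_self_eq_zero.mp ?_
  calc p ⬝ᵥ p = p ⬝ᵥ x := Finset.sum_congr rfl fun i _ => by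
          by_cases hi : i ∈ S
          · rw [hxS i hi]
          · simp [hpS i hi]
    _ = 0 := hpX x hx

theorem sympForm_swap {n : ℕ} (v w : (Fin n → ℝ) × (Fin n → ℝ)) :
    sympForm w v = -sympForm v w := by
  simp only [sympForm, dotProduct_comm]
  ring

noncomputable def sympBilin (n : ℕ) : LinearMap.BilinForm ℝ ((Fin n → ℝ) × (Fin n → ℝ)) :=
  LinearMap.mk₂ ℝ sympForm
    (fun _ _ _ => by simp only [sympForm, Prod.fst_add, Prod.snd_add, dotProduct_add,
      add_dotProduct]; ring)
    (fun _ _ _ => by simp [sympForm, mul_sub])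
    (fun _ _ _ => by simp only [sympForm, Prod.fst_add, Prod.snd_add, dotProduct_add,
      add_dotProduct]; ring)
    (fun _ _ _ => by simp [sympForm, mul_sub])

theorem sympBilin_apply {n : ℕ} (v w : (Fin n → ℝ) × (Fin n → ℝ)) :
    sympBilin n v w = sympForm v w := rfl

theorem sympBilin_isRefl (n : ℕ) : (sympBilin n).IsRefl := fun v w h => by
  rw [sympBilin_apply, sympForm_swap, ← sympBilin_apply, h, neg_zero]

theorem sympBilin_nondegenerate (n : ℕ) : (sympBilin n).Nondegenerate := by
  refine ((sympBilin_isRefl n).nondegenerate_iff_separatingLeft).mpr fun v hv => ?_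
  have h₁ := hv (0, v.1)
  have h₂ := hv (v.2, 0)
  simp only [sympBilin_apply, sympForm, dotProduct_zero, zero_dotProduct, sub_zero, zero_sub,
    neg_eq_zero, dotProduct_self_eq_zero] at h₁ h₂
  exact Prod.ext h₁ h₂

theorem IsLagrange.eq_orthogonal {n : ℕ} {L : Submodule ℝ ((Fin n → ℝ) × (Fin n → ℝ))}
    (hL : IsLagrange L) : (sympBilin n).orthogonal L = L := by
  ext v
  simp only [LinearMap.BilinForm.mem_orthogonal_iff, sympBilin_apply, sympForm_swap v,
    neg_eq_zero, hL v]

theorem IsLagrange.finrank_eq {n : ℕ} {L : Submodule ℝ ((Fin n → ℝ) × (Fin n → ℝ))}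
    (hL : IsLagrange L) : finrank ℝ L = n := by
  have := LinearMap.BilinForm.finrank_orthogonal (sympBilin_nondegenerate n) L
  rw [hL.eq_orthogonal, finrank_prod, finrank_fin_fun] at this
  omega

section Split

variable {n : ℕ} (S : Finset (Fin n))

/-- In coordinates split along `S`, `x = (x₁, x₂)` and `p = (p₁, p₂)` with `x₁, p₁` indexed
by `S`; `splitIn S` and `splitOut S` send `(x, p)` to `(x₁, p₂)` and `(p₁, -x₂)`. -/
@[simps]
def splitIn : ((Fin n → ℝ) × (Fin n → ℝ)) →ₗ[ℝ] (Fin n → ℝ) where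
  toFun v i := if i ∈ S then v.1 i else v.2 i
  map_add' v w := by ext i; by_cases h : i ∈ S <;> simp [h]
  map_smul' c v := by ext i; by_cases h : i ∈ S <;> simp [h]

@[simps]
def splitOut : ((Fin n → ℝ) × (Fin n → ℝ)) →ₗ[ℝ] (Fin n → ℝ) where
  toFun v i := if i ∈ S then v.2 i else -v.1 i
  map_add' v w := by ext i; by_cases h : i ∈ S <;> simp [h, add_comm]
  map_smul' c v := by ext i; by_cases h : i ∈ S <;> simp [h]

theorem sympForm_eq_splitOut_dotProduct_sub (v w : (Fin n → ℝ) × (Fin n → ℝ)) :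
    sympForm v w = splitOut S w ⬝ᵥ splitIn S v - splitOut S v ⬝ᵥ splitIn S w := by
  simp only [sympForm, dotProduct, ← Finset.sum_sub_distrib, splitIn_apply, splitOut_apply]
  refine Finset.sum_congr rfl fun i _ => ?_
  split_ifs <;> ring

theorem splitIn_splitOut_injective {v w : (Fin n → ℝ) × (Fin n → ℝ)}
    (hin : splitIn S v = splitIn S w) (hout : splitOut S v = splitOut S w) : v = w := by
  ext i <;> have hi := congrFun hin i <;> have ho := congrFun hout i <;>
    by_cases h : i ∈ S <;> simp_all

end Split

theorem IsLagrange.bijective_splitIn {n : ℕ} {L : Submodule ℝ ((Fin n → ℝ) × (Fin n → ℝ))}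
    (hL : IsLagrange L) {S : Finset (Fin n)}
    (hS : Function.Bijective ((LinearMap.funLeft ℝ ℝ ((↑) : S → Fin n)).domRestrict
      (L.map (LinearMap.fst ℝ (Fin n → ℝ) (Fin n → ℝ))))) :
    Function.Bijective (splitIn S ∘ₗ L.subtype) := by
  have hinj : Function.Injective (splitIn S ∘ₗ L.subtype) := by
    rw [← LinearMap.ker_eq_bot, Submodule.eq_bot_iff]
    rintro ⟨⟨x, p⟩, hv⟩ hker
    have hin : ∀ i, (if i ∈ S then x i else p i) = 0 := congrFun hker
    have hx : x = 0 := by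
      have := @hS.1 ⟨x, (x, p), hv, rfl⟩ 0 (by ext ⟨i, hi⟩; simpa [hi] using hin i)
      simpa using congrArg Subtype.val this
    subst hx
    have hp : p = 0 := by
      refine eq_zero_of_forall_dotProduct_eq_zero hS.2 ?_ fun i hi => by
        simpa [hi] using hin i
      rintro _ ⟨w, hw, rfl⟩
      simpa [sympForm] using (hL _).1 hv w hw
    simp [hp]
  refine ⟨hinj, (LinearMap.injective_iff_surjective_of_finrank_eq_finrank ?_).mp hinj⟩
  rw [hL.finrank_eq, finrank_fin_fun]

theorem IsLagrange.exists_isSymm_splitOut_eq_mulVec_splitIn {n : ℕ}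
    {L : Submodule ℝ ((Fin n → ℝ) × (Fin n → ℝ))} (hL : IsLagrange L) {S : Finset (Fin n)}
    (hS : Function.Bijective (splitIn S ∘ₗ L.subtype)) :
    ∃ W : Matrix (Fin n) (Fin n) ℝ, W.IsSymm ∧
      ∀ v, v ∈ L ↔ splitOut S v = W *ᵥ splitIn S v := by
  set e := LinearEquiv.ofBijective _ hS
  set W := LinearMap.toMatrix' (splitOut S ∘ₗ L.subtype ∘ₗ e.symm.toLinearMap)
  have hW (u : Fin n → ℝ) : W *ᵥ u = splitOut S (e.symm u) := LinearMap.toMatrix'_mulVec _ u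
  have hsplitIn (u : Fin n → ℝ) : splitIn S (e.symm u) = u := e.apply_symm_apply u
  refine ⟨W, isSymm_of_mulVec_dotProduct_comm fun u u' => ?_,
    fun v => ⟨fun hv => ?_, fun hv => ?_⟩⟩
  · have hiso := (hL _).1 (e.symm u).2 _ (e.symm u').2
    rw [sympForm_eq_splitOut_dotProduct_sub S, hsplitIn, hsplitIn] at hiso
    rw [hW, hW]
    linarith
  · rw [hW, show e.symm (splitIn S v) = ⟨v, hv⟩ from e.symm_apply_eq.mpr rfl]
  · rw [← splitIn_splitOut_injective S (hsplitIn (splitIn S v)) (by rw [← hW, hv])]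
    exact (e.symm _).2

theorem Fin.exists_perm_mem_iff_lt {n : ℕ} (S : Finset (Fin n)) :
    ∃ σ : Equiv.Perm (Fin n), ∀ i, σ i ∈ S ↔ (i : ℕ) < S.card := by
  obtain ⟨σ, hσ⟩ := Equiv.Perm.exists_map_finset_eq {i : Fin n | (i : ℕ) < S.card} S
    (by rw [Fin.card_filter_val_lt, min_eq_right (card_finset_fin_le S)])
  refine ⟨σ, fun i => ?_⟩
  have hi := Finset.mem_map' σ.toEmbedding (s := {i : Fin n | (i : ℕ) < S.card}) (a := i)
  rw [hσ] at hi
  simpa using hi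

/-- After simultaneously permuting the coordinates of the `x`- and `p`-components by `σ`,
a Lagrange subspace with `m`-dimensional projection onto the first factor is described
by a symmetric generating matrix `W` via `(p₁, −x₂) = W (x₁, p₂)`, where the first `m`
(permuted) coordinates carry `x₁, p₁` and the remaining ones carry `x₂, p₂`. -/
theorem stmt_10 {n : ℕ} (L : Submodule ℝ ((Fin n → ℝ) × (Fin n → ℝ)))
    (hL : IsLagrange L) (m : ℕ)
    (hm : m = Module.finrank ℝ
      (L.map (LinearMap.fst ℝ (Fin n → ℝ) (Fin n → ℝ)))) :
    ∃ (σ : Equiv.Perm (Fin n)) (W : Matrix (Fin n) (Fin n) ℝ), W.IsSymm ∧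
      ∀ x p : Fin n → ℝ,
        ((x, p) ∈ L ↔
          (fun i : Fin n => if (i : ℕ) < m then p (σ i) else -(x (σ i))) =
            W *ᵥ (fun i : Fin n => if (i : ℕ) < m then x (σ i) else p (σ i))) := by
  obtain ⟨S, hcard, hS⟩ :=
    (L.map (LinearMap.fst ℝ (Fin n → ℝ) (Fin n → ℝ))).exists_finset_funLeft_bijective
  obtain ⟨W, hW, hLW⟩ := hL.exists_isSymm_splitOut_eq_mulVec_splitIn (hL.bijective_splitIn hS)
  obtain ⟨σ, hσ⟩ := Fin.exists_perm_mem_iff_lt S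
  rw [hcard, ← hm] at hσ
  refine ⟨σ, W.submatrix σ σ, hW.submatrix σ, fun x p => ?_⟩
  have hin : (fun i : Fin n => if (i : ℕ) < m then x (σ i) else p (σ i)) =
      splitIn S (x, p) ∘ σ := by
    ext i; simp [← hσ]
  have hout : (fun i : Fin n => if (i : ℕ) < m then p (σ i) else -(x (σ i))) =
      splitOut S (x, p) ∘ σ := by
    ext i; simp [← hσ]
  rw [hLW, hin, hout, submatrix_mulVec_equiv, Function.comp_assoc, σ.self_comp_symm,
    Function.comp_id]
  exact σ.surjective.injective_comp_right.eq_iff.symm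
end

section
/- Let A be a real n×n matrix, B a real n×m matrix, C a real m×n matrix, D a real m×m matrix, Q = Qᵀ a real symmetric n×n matrix, and let M (r×n) and N (r×m) be real matrices such that [[Aᵀ Q + Q A, Q B − Cᵀ], [Bᵀ Q − C, −D − Dᵀ]] = −[[Mᵀ M, Mᵀ N], [Nᵀ M, Nᵀ N]]. Then for every s ∈ ℂ such that sI − A and sI + Aᵀ are invertible (as complex matrices, with the real matrices coerced entrywise into ℂ), one has G(s) + G(−s)ᵀ = K(−s)ᵀ K(s), where G(s) = C (sI − A)⁻¹ B + D and K(s) = M (sI − A)⁻¹ B + N; explicitly, C(sI−A)⁻¹B + D + Bᵀ(−sI−Aᵀ)⁻¹Cᵀ + Dᵀ = (Bᵀ(−sI−Aᵀ)⁻¹Mᵀ + Nᵀ)(M(sI−A)⁻¹B + N). -/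
open Matrix

/-- Entrywise coercion of a real matrix into a complex matrix. -/
def cm {a b : ℕ} (M : Matrix (Fin a) (Fin b) ℝ) : Matrix (Fin a) (Fin b) ℂ :=
  M.map Complex.ofReal

lemma cm_mul {a b c : ℕ} (X : Matrix (Fin a) (Fin b) ℝ) (Y : Matrix (Fin b) (Fin c) ℝ) :
    cm (X * Y) = cm X * cm Y := by
  ext i j
  simp [cm, Matrix.mul_apply]

lemma cm_add {a b : ℕ} (X Y : Matrix (Fin a) (Fin b) ℝ) : cm (X + Y) = cm X + cm Y := by
  ext i j; simp [cm]

lemma cm_sub {a b : ℕ} (X Y : Matrix (Fin a) (Fin b) ℝ) : cm (X - Y) = cm X - cm Y := by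
  ext i j; simp [cm]

lemma cm_neg {a b : ℕ} (X : Matrix (Fin a) (Fin b) ℝ) : cm (-X) = -cm X := by
  ext i j; simp [cm]

lemma cm_transpose {a b : ℕ} (X : Matrix (Fin a) (Fin b) ℝ) : cm Xᵀ = (cm X)ᵀ := by
  ext i j; simp [cm]

theorem stmt_11 {n m r : ℕ} (A : Matrix (Fin n) (Fin n) ℝ)
    (B : Matrix (Fin n) (Fin m) ℝ) (C : Matrix (Fin m) (Fin n) ℝ)
    (D : Matrix (Fin m) (Fin m) ℝ) (Q : Matrix (Fin n) (Fin n) ℝ)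
    (M : Matrix (Fin r) (Fin n) ℝ) (N : Matrix (Fin r) (Fin m) ℝ)
    (hQ : Qᵀ = Q)
    (h : Matrix.fromBlocks (Aᵀ * Q + Q * A) (Q * B - Cᵀ) (Bᵀ * Q - C) (-D - Dᵀ) =
      -(Matrix.fromBlocks (Mᵀ * M) (Mᵀ * N) (Nᵀ * M) (Nᵀ * N))) :
    ∀ s : ℂ,
      IsUnit (s • (1 : Matrix (Fin n) (Fin n) ℂ) - cm A) →
      IsUnit (s • (1 : Matrix (Fin n) (Fin n) ℂ) + (cm A)ᵀ) →
      (cm C * (s • (1 : Matrix (Fin n) (Fin n) ℂ) - cm A)⁻¹ * cm B + cm D) +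
        ((cm B)ᵀ * (-(s • (1 : Matrix (Fin n) (Fin n) ℂ)) - (cm A)ᵀ)⁻¹ * (cm C)ᵀ + (cm D)ᵀ) =
      ((cm B)ᵀ * (-(s • (1 : Matrix (Fin n) (Fin n) ℂ)) - (cm A)ᵀ)⁻¹ * (cm M)ᵀ + (cm N)ᵀ) *
        (cm M * (s • (1 : Matrix (Fin n) (Fin n) ℂ) - cm A)⁻¹ * cm B + cm N) := by
  intro s hLu hRu
  -- extract the block equations
  rw [Matrix.fromBlocks_neg, Matrix.fromBlocks_inj] at h
  obtain ⟨h11, h12, h21, h22⟩ := h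
  set L : Matrix (Fin n) (Fin n) ℂ := s • (1 : Matrix (Fin n) (Fin n) ℂ) - cm A with hLdef
  set R : Matrix (Fin n) (Fin n) ℂ := s • (1 : Matrix (Fin n) (Fin n) ℂ) + (cm A)ᵀ with hRdef
  have hLdet : IsUnit L.det := (Matrix.isUnit_iff_isUnit_det L).mp hLu
  have hRdet : IsUnit R.det := (Matrix.isUnit_iff_isUnit_det R).mp hRu
  set X := L⁻¹ with hXdef
  set Y := R⁻¹ with hYdef
  have hLX : L * X = 1 := Matrix.mul_nonsing_inv L hLdet
  have hYR : Y * R = 1 := Matrix.nonsing_inv_mul R hRdet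
  -- rewrite the inverse of the negated matrix
  have hneg : (-(s • (1 : Matrix (Fin n) (Fin n) ℂ)) - (cm A)ᵀ) = -R := by
    rw [hRdef]; abel
  have hNRinv : (-R)⁻¹ = -Y := by
    apply Matrix.inv_eq_right_inv
    rw [neg_mul_neg, hYdef, Matrix.mul_nonsing_inv R hRdet]
  rw [hneg, hNRinv]
  -- complex block hypotheses
  have hMM : (cm M)ᵀ * cm M = cm Q * L - R * cm Q := by
    have h1 : Mᵀ * M = -(Aᵀ * Q + Q * A) := by rw [h11, neg_neg]
    rw [← cm_transpose, ← cm_mul, h1, cm_neg, cm_add, cm_mul, cm_mul, cm_transpose,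
      hLdef, hRdef]
    simp only [Matrix.mul_sub, Matrix.sub_mul, Matrix.add_mul, Matrix.mul_add,
      Matrix.mul_smul, Matrix.smul_mul, Matrix.mul_one, Matrix.one_mul]
    abel
  have hMN : (cm M)ᵀ * cm N = (cm C)ᵀ - cm Q * cm B := by
    have h1 : Mᵀ * N = Cᵀ - Q * B := by
      have h2 : Mᵀ * N = -(Q * B - Cᵀ) := by rw [h12, neg_neg]
      rw [h2]; abel
    rw [← cm_transpose, ← cm_mul, h1, cm_sub, cm_mul, cm_transpose]
  have hNM : (cm N)ᵀ * cm M = cm C - (cm B)ᵀ * cm Q := by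
    have h1 : Nᵀ * M = C - Bᵀ * Q := by
      have h2 : Nᵀ * M = -(Bᵀ * Q - C) := by rw [h21, neg_neg]
      rw [h2]; abel
    rw [← cm_transpose, ← cm_mul, h1, cm_sub, cm_mul, cm_transpose]
  have hNN : (cm N)ᵀ * cm N = cm D + (cm D)ᵀ := by
    have h1 : Nᵀ * N = D + Dᵀ := by
      have h2 : Nᵀ * N = -(-D - Dᵀ) := by rw [h22, neg_neg]
      rw [h2]; abel
    rw [← cm_transpose, ← cm_mul, h1, cm_add, cm_transpose]
  -- key monomial computation
  have key1 : (cm M)ᵀ * (cm M * (X * cm B)) = cm Q * cm B - R * (cm Q * (X * cm B)) := by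
    rw [← Matrix.mul_assoc, hMM, Matrix.sub_mul, Matrix.mul_assoc (cm Q) L,
      ← Matrix.mul_assoc L X, hLX, Matrix.one_mul, Matrix.mul_assoc R]
  have key2 : Y * ((cm M)ᵀ * (cm M * (X * cm B)))
      = Y * (cm Q * cm B) - cm Q * (X * cm B) := by
    rw [key1, Matrix.mul_sub, ← Matrix.mul_assoc Y R, hYR, Matrix.one_mul]
  -- expand and finish
  simp only [Matrix.add_mul, Matrix.mul_add, Matrix.neg_mul, Matrix.mul_neg,
    Matrix.mul_assoc]
  rw [key2, ← Matrix.mul_assoc ((cm N)ᵀ) (cm M), hMN, hNM, hNN]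
  simp only [Matrix.add_mul, Matrix.mul_add, Matrix.sub_mul, Matrix.mul_sub,
    Matrix.neg_mul, Matrix.mul_neg, Matrix.mul_assoc]
  abel
end

section
/- Let A, P, S be real n×n matrices, B a real n×m matrix, C a real m×n matrix, D a real m×m matrix, and M (r×n), N (r×m) real matrices such that [[Sᵀ A P + Pᵀ Aᵀ S, Sᵀ B − Pᵀ Cᵀ], [Bᵀ S − C P, −D − Dᵀ]] = −[[Mᵀ M, Mᵀ N], [Nᵀ M, Nᵀ N]]. Then for all z ∈ ℝⁿ, v ∈ ℝⁿ, u ∈ ℝᵐ: (v + S z)ᵀ (A P z + B u) − uᵀ (C P z + D u) = vᵀ (A P z + B u) − (1/2) (M z + N u)ᵀ (M z + N u). -/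
open Matrix

lemma stmt_15_helper {a b : ℕ} (X : Matrix (Fin a) (Fin b) ℝ) (x : Fin b → ℝ) (y : Fin a → ℝ) :
    x ⬝ᵥ (Xᵀ *ᵥ y) = (X *ᵥ x) ⬝ᵥ y := by
  rw [Matrix.dotProduct_mulVec, Matrix.vecMul_transpose]

theorem stmt_15 {n m r : ℕ} (A P S : Matrix (Fin n) (Fin n) ℝ)
    (B : Matrix (Fin n) (Fin m) ℝ) (C : Matrix (Fin m) (Fin n) ℝ)
    (D : Matrix (Fin m) (Fin m) ℝ)
    (M : Matrix (Fin r) (Fin n) ℝ) (N : Matrix (Fin r) (Fin m) ℝ)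
    (h : Matrix.fromBlocks
        (Sᵀ * A * P + Pᵀ * Aᵀ * S) (Sᵀ * B - Pᵀ * Cᵀ)
        (Bᵀ * S - C * P) (-D - Dᵀ) =
      -(Matrix.fromBlocks (Mᵀ * M) (Mᵀ * N) (Nᵀ * M) (Nᵀ * N))) :
    ∀ (z v : Fin n → ℝ) (u : Fin m → ℝ),
      (v + S *ᵥ z) ⬝ᵥ (A *ᵥ (P *ᵥ z) + B *ᵥ u) - u ⬝ᵥ (C *ᵥ (P *ᵥ z) + D *ᵥ u) =
        v ⬝ᵥ (A *ᵥ (P *ᵥ z) + B *ᵥ u) -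
          (1 / 2) * ((M *ᵥ z + N *ᵥ u) ⬝ᵥ (M *ᵥ z + N *ᵥ u)) := by
  intro z v u
  have hq := congrArg (fun X => Sum.elim z u ⬝ᵥ (X *ᵥ Sum.elim z u)) h
  simp only [fromBlocks_mulVec, neg_mulVec, add_mulVec, sub_mulVec,
    sumElim_dotProduct_sumElim, dotProduct_neg, dotProduct_add, dotProduct_sub,
    Sum.elim_comp_inl, Sum.elim_comp_inr, ← Matrix.mulVec_mulVec] at hq
  simp only [stmt_15_helper] at hq
  simp only [dotProduct_add, add_dotProduct]
  linarith [hq,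
    dotProduct_comm (A *ᵥ (P *ᵥ z)) (S *ᵥ z),
    dotProduct_comm (C *ᵥ (P *ᵥ z)) u,
    dotProduct_comm (B *ᵥ u) (S *ᵥ z),
    dotProduct_comm (D *ᵥ u) u,
    dotProduct_comm (M *ᵥ z) (N *ᵥ u)]
end
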